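/- Let k be an algebraically closed field of characteristic 0 and let V = V_{(2,2),(2,2)} ⊆ P^{35} be the Segre–Veronese embedding of P^2×P^2 by forms of bidegree (2,2). Then for any 8 points P_1,…,P_8 of P^2×P^2 there is a nonzero bihomogeneous form of bidegree (2,2) lying in ℘_{P_1}^2 ∩ ⋯ ∩ ℘_{P_8}^2 (namely a product of two bidegree-(1,1) forms through the 8 points); consequently H(Z,(2,2)) ≤ 35 < 36 for the scheme Z of 8 generic 2-fat points, dim V^8 ≤ 34 < 35 = min{35, 8·5−1}, and V is 7-defective. -/

import Mathlib

open MvPolynomial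

noncomputable section

variable (k : Type) [Field k]

/-- Projective space with homogeneous coordinates indexed by `ι`. -/
abbrev Pr (ι : Type) : Type := Projectivization k (ι → k)

/-- The affine cone over a subset of projective space. -/
def pcone {ι : Type} (S : Set (Pr k ι)) : Set (ι → k) :=
  {v | ∃ hv : v ≠ 0, Projectivization.mk k v hv ∈ S} ∪ {0}

/-- The homogeneous vanishing ideal of a subset of projective space. -/
def projIdeal {ι : Type} (S : Set (Pr k ι)) : Ideal (MvPolynomial ι k) :=
  vanishingIdeal k (pcone k S)

/-- The Zariski closure of a subset of projective space. -/
def zclosure {ι : Type} (S : Set (Pr k ι)) : Set (Pr k ι) :=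
  {x | ∀ f ∈ projIdeal k S, ∀ (v : ι → k) (hv : v ≠ 0),
    Projectivization.mk k v hv = x → eval v f = 0}

/-- `X` has (projective) dimension `d`: the affine cone over `X` has Krull dimension `d + 1`. -/
def HasDim {ι : Type} (X : Set (Pr k ι)) (d : ℕ) : Prop :=
  ringKrullDim (MvPolynomial ι k ⧸ projIdeal k X) = ((d + 1 : ℕ) : WithBot (WithTop ℕ))

/-- The union of the linear spans of `s`-tuples of points of `X`. -/
def secantSet {ι : Type} (X : Set (Pr k ι)) (s : ℕ) : Set (Pr k ι) :=
  {x | ∃ P : Fin s → Pr k ι, (∀ i, P i ∈ X) ∧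
    ∃ (v : ι → k) (hv : v ≠ 0), x = Projectivization.mk k v hv ∧
      v ∈ Submodule.span k (Set.range fun i => (P i).rep)}

/-- The `s`-th higher secant variety `X^s` of `X`. -/
def secantVariety {ι : Type} (X : Set (Pr k ι)) (s : ℕ) : Set (Pr k ι) :=
  zclosure k (secantSet k X s)

/-- The set of (Plücker coordinates of) `m`-planes lying in the span of `s` points of `X`. -/
def grassSecantSet {ι : Type} (X : Set (Pr k ι)) (m s : ℕ) :
    Set (Pr k (Fin (m + 1) → ι)) :=
  {x | ∃ P : Fin s → Pr k ι, (∀ i, P i ∈ X) ∧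
    ∃ w : Fin (m + 1) → ι → k, LinearIndependent k w ∧
      (∀ j, w j ∈ Submodule.span k (Set.range fun i => (P i).rep)) ∧
      ∃ h, x = Projectivization.mk k
        (fun c => (Matrix.of fun i j => w i (c j)).det) h}

/-- The `(m, s-1)` Grassmann secant variety of `X`, in its Plücker embedding. -/
def grassSecantVariety {ι : Type} (X : Set (Pr k ι)) (m s : ℕ) :
    Set (Pr k (Fin (m + 1) → ι)) :=
  zclosure k (grassSecantSet k X m s)

/-- Index type for the coordinates of the Segre–Veronese embedding of
`P^{n 0} × ⋯ × P^{n (t-1)}` in multidegree `a`: exponent vectors of multidegree `a`. -/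
abbrev SVIdx (t : ℕ) (n a : Fin t → ℕ) : Type :=
  {d : (i : Fin t) → Fin (n i + 1) → ℕ // ∀ i, ∑ j, d i j = a i}

/-- The Segre–Veronese variety: image of `P^{n 0} × ⋯ × P^{n (t-1)}` under the embedding by
all monomials of multidegree `a`. -/
def segreVeronese (t : ℕ) (n a : Fin t → ℕ) : Set (Pr k (SVIdx t n a)) :=
  {x | ∃ v : (i : Fin t) → Fin (n i + 1) → k, (∀ i, v i ≠ 0) ∧
    ∃ h, x = Projectivization.mk k (fun d => ∏ i, ∏ j, v i j ^ d.1 i j) h}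

/-- Variables of the multihomogeneous coordinate ring of `P^{n 0} × ⋯ × P^{n (t-1)}`. -/
abbrev MPVar (t : ℕ) (n : Fin t → ℕ) : Type := Σ i : Fin t, Fin (n i + 1)

/-- The multigraded piece of multidegree `a` of the coordinate ring of multiprojective space:
the span of the monomials having degree `a i` in the `i`-th block of variables. -/
def multiHomog (t : ℕ) (n : Fin t → ℕ) (a : Fin t → ℕ) :
    Submodule k (MvPolynomial (MPVar t n) k) :=
  Submodule.span k {f | ∃ m : MPVar t n →₀ ℕ,
    (∀ i, ∑ j, m ⟨i, j⟩ = a i) ∧ f = monomial m 1}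

/-- The multihomogeneous (prime) ideal of a point of multiprojective space with
multihomogeneous coordinates `v`: generated by the multidegree-`(0,…,1,…,0)` forms
vanishing at `v`. -/
def mpPointIdeal (t : ℕ) (n : Fin t → ℕ) (v : (i : Fin t) → Fin (n i + 1) → k) :
    Ideal (MvPolynomial (MPVar t n) k) :=
  Ideal.span {f | (∃ i, f ∈ multiHomog k t n (Pi.single i 1)) ∧
    eval (fun p : MPVar t n => v p.1 p.2) f = 0}

/-- The homogeneous (prime) ideal of the point of projective space with homogeneous
coordinates `v`: generated by the linear forms vanishing at `v`. -/
def pointIdeal {ι : Type} (v : ι → k) : Ideal (MvPolynomial ι k) :=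
  Ideal.span {f | f ∈ homogeneousSubmodule ι k 1 ∧ eval v f = 0}

/-- The homogeneous ideal of a linear subspace of projective space, corresponding to the
linear subspace `W` of the underlying vector space: generated by the linear forms
vanishing on `W`. -/
def subspaceIdeal {ι : Type} (W : Submodule k (ι → k)) : Ideal (MvPolynomial ι k) :=
  Ideal.span {f | f ∈ homogeneousSubmodule ι k 1 ∧ ∀ w ∈ W, eval w f = 0}

/-- The degree-`d` graded piece of an ideal, as a `k`-vector space. -/
def idealPiece {ι : Type} (I : Ideal (MvPolynomial ι k)) (d : ℕ) :
    Submodule k (MvPolynomial ι k) :=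
  Submodule.restrictScalars k I ⊓ homogeneousSubmodule ι k d

/-- The multidegree-`a` graded piece of an ideal in the multihomogeneous coordinate ring,
as a `k`-vector space. -/
def mIdealPiece {t : ℕ} {n : Fin t → ℕ} (I : Ideal (MvPolynomial (MPVar t n) k))
    (a : Fin t → ℕ) : Submodule k (MvPolynomial (MPVar t n) k) :=
  Submodule.restrictScalars k I ⊓ multiHomog k t n a

/-- Variables `z_0, z_{j,i}` (`1 ≤ j ≤ n i`) of the coordinate ring of `P^n`,
`n = n 0 + ⋯ + n (t-1)`. -/
abbrev TVar (t : ℕ) (n : Fin t → ℕ) : Type := Option (Σ i : Fin t, Fin (n i))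

/-- The coordinates of the image, under the Multiprojective-Affine-Projective map `f`,
of the point of `P^{n 0} × ⋯ × P^{n (t-1)}` with multihomogeneous coordinates `v`. -/
def fMap (t : ℕ) (n : Fin t → ℕ) (v : (i : Fin t) → Fin (n i + 1) → k) : TVar t n → k
  | none => ∏ i, v i 0
  | some p => v p.1 p.2.succ * ∏ l ∈ Finset.univ.erase p.1, v l 0

/-- The ideal `I_{Π_i}` of the coordinate linear subspace `Π_i ≅ P^{n i − 1}` of `P^n`:
generated by all the variables except `z_{1,i}, …, z_{n i,i}`. -/
def coordSubspaceIdeal (t : ℕ) (n : Fin t → ℕ) (i : Fin t) :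
    Ideal (MvPolynomial (TVar t n) k) :=
  Ideal.span {f | ∃ v : TVar t n, (∀ j : Fin (n i), v ≠ some ⟨i, j⟩) ∧ f = X v}

/-- The image of `X × P^m` under the Segre embedding. -/
def segreImage (N m : ℕ) (X : Set (Pr k (Fin (N + 1)))) :
    Set (Pr k (Fin (N + 1) × Fin (m + 1))) :=
  {y | ∃ (v : Fin (N + 1) → k) (hv : v ≠ 0), Projectivization.mk k v hv ∈ X ∧
    ∃ w : Fin (m + 1) → k, w ≠ 0 ∧
      ∃ h, y = Projectivization.mk k (fun p => v p.1 * w p.2) h}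

end

noncomputable section Aux
namespace SV17
open MvPolynomial
variable {k : Type} [Field k]

def e (p : Fin 3) : Fin 3 → ℕ := fun j => if p = j then 1 else 0

lemma sum_e (p : Fin 3) : ∑ j, e p j = 1 := by simp [e]

lemma prod_pow_e {M : Type} [CommMonoid M] (x : Fin 3 → M) (p : Fin 3) :
    ∏ j, x j ^ e p j = x p := by
  have : ∀ j, x j ^ e p j = if p = j then x j else 1 := by
    intro j; by_cases h : p = j <;> simp [e, h]
  simp only [this, Finset.prod_ite_eq]
  simp

lemma decomp2' (a b c : ℕ) (h : a + b + c = 2) :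
    ∃ p p' : Fin 3, p ≤ p' ∧ a = e p 0 + e p' 0 ∧ b = e p 1 + e p' 1 ∧ c = e p 2 + e p' 2 := by
  have h0 : a ≤ 2 := by omega
  have h1 : b ≤ 2 := by omega
  have h2 : c ≤ 2 := by omega
  interval_cases a <;> interval_cases b <;> interval_cases c <;> first | omega | decide

def xv (p : Fin 3) : MPVar 2 ![2,2] := ⟨0, p⟩
def yv (q : Fin 3) : MPVar 2 ![2,2] := ⟨1, q⟩

lemma xv_inj (p p' : Fin 3) : xv p = xv p' ↔ p = p' := by
  unfold xv; exact ⟨fun h => eq_of_heq (Sigma.mk.inj h).2, fun h => h ▸ rfl⟩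
lemma yv_inj (q q' : Fin 3) : yv q = yv q' ↔ q = q' := by
  unfold yv; exact ⟨fun h => eq_of_heq (Sigma.mk.inj h).2, fun h => h ▸ rfl⟩
lemma xv_ne_yv (p q : Fin 3) : xv p ≠ yv q := by
  unfold xv yv; exact fun h => absurd (Sigma.mk.inj h).1 (by decide)

def m11 (p q : Fin 3) : MPVar 2 ![2,2] →₀ ℕ :=
  Finsupp.single (xv p) 1 + Finsupp.single (yv q) 1

lemma m11_apply_x (p q p' : Fin 3) : m11 p q (xv p') = e p p' := by
  rw [m11, Finsupp.add_apply, Finsupp.single_apply, Finsupp.single_apply]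
  rw [if_neg (xv_ne_yv p' q).symm]  -- careful orientation
  simp [xv_inj, e, eq_comm]

lemma m11_apply_y (p q q' : Fin 3) : m11 p q (yv q') = e q q' := by
  rw [m11, Finsupp.add_apply, Finsupp.single_apply, Finsupp.single_apply]
  rw [if_neg (xv_ne_yv p q')]
  simp [yv_inj, e, eq_comm]

def F11 (c : Fin 3 × Fin 3 → k) : MvPolynomial (MPVar 2 ![2,2]) k :=
  ∑ pq : Fin 3 × Fin 3, monomial (m11 pq.1 pq.2) (c pq)

lemma m11_inj {p q p' q' : Fin 3} (h : m11 p q = m11 p' q') : p = p' ∧ q = q' := by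
  constructor
  · have h1 := DFunLike.congr_fun h (xv p)
    rw [m11_apply_x, m11_apply_x] at h1
    by_cases hpp : p' = p
    · exact hpp.symm
    · exfalso; simp [e, hpp] at h1
  · have h1 := DFunLike.congr_fun h (yv q)
    rw [m11_apply_y, m11_apply_y] at h1
    by_cases hqq : q' = q
    · exact hqq.symm
    · exfalso; simp [e, hqq] at h1

lemma coeff_F11 (c : Fin 3 × Fin 3 → k) (p q : Fin 3) :
    coeff (m11 p q) (F11 c) = c (p, q) := by
  rw [F11]
  rw [MvPolynomial.coeff_sum]
  have : ∀ pq : Fin 3 × Fin 3,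
      coeff (m11 p q) (monomial (m11 pq.1 pq.2) (c pq)) = if pq = (p, q) then c pq else 0 := by
    intro pq
    rw [MvPolynomial.coeff_monomial]
    congr 1
    simp only [eq_iff_iff]
    constructor
    · intro h; obtain ⟨h1, h2⟩ := m11_inj h; exact Prod.ext h1 h2
    · rintro rfl; rfl
  simp only [this]
  simp

lemma m11_deg (p q : Fin 3) (i : Fin 2) : ∑ j, m11 p q ⟨i, j⟩ = ![1,1] i := by
  fin_cases i
  · show ∑ j : Fin 3, m11 p q (xv j) = 1
    simp [m11_apply_x, sum_e]
  · show ∑ j : Fin 3, m11 p q (yv j) = 1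
    simp [m11_apply_y, sum_e]

lemma F11_mem_multiHomog (c : Fin 3 × Fin 3 → k) :
    F11 c ∈ multiHomog k 2 ![2,2] ![1,1] := by
  apply Submodule.sum_mem
  intro pq _
  have : monomial (m11 pq.1 pq.2) (c pq) = c pq • monomial (m11 pq.1 pq.2) (1:k) := by
    rw [MvPolynomial.smul_monomial, smul_eq_mul, mul_one]
  rw [this]
  exact Submodule.smul_mem _ _ (Submodule.subset_span ⟨m11 pq.1 pq.2, m11_deg pq.1 pq.2, rfl⟩)

lemma eval_F11 (c : Fin 3 × Fin 3 → k) (v : (i : Fin 2) → Fin ((![2,2] : Fin 2 → ℕ) i + 1) → k) :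
    eval (fun s : MPVar 2 ![2,2] => v s.1 s.2) (F11 c)
      = ∑ pq : Fin 3 × Fin 3, c pq * (v 0 pq.1 * v 1 pq.2) := by
  rw [F11, map_sum]
  apply Finset.sum_congr rfl
  intro pq _
  rw [MvPolynomial.eval_monomial, m11]
  rw [Finsupp.prod_add_index' (fun a => pow_zero _) (fun a m n => pow_add _ _ _)]
  simp [Finsupp.prod_single_index, xv, yv]

def Aform (v : (i : Fin 2) → Fin ((![2,2] : Fin 2 → ℕ) i + 1) → k) (p0 p : Fin 3) :
    MvPolynomial (MPVar 2 ![2,2]) k :=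
  C (v 0 p0) * X (xv p) - C (v 0 p) * X (xv p0)

def Bform (v : (i : Fin 2) → Fin ((![2,2] : Fin 2 → ℕ) i + 1) → k) (q0 q : Fin 3) :
    MvPolynomial (MPVar 2 ![2,2]) k :=
  C (v 1 q0) * X (yv q) - C (v 1 q) * X (yv q0)

lemma single_deg_x (p : Fin 3) (i : Fin 2) :
    ∑ j, Finsupp.single (xv p) (1:ℕ) ⟨i, j⟩ = (Pi.single (0 : Fin 2) (1:ℕ) : Fin 2 → ℕ) i := by
  fin_cases i
  · show ∑ j : Fin 3, Finsupp.single (xv p) (1:ℕ) (xv j) = _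
    simp [Finsupp.single_apply, xv_inj, Pi.single_apply]
  · show ∑ j : Fin 3, Finsupp.single (xv p) (1:ℕ) (yv j) = _
    have : ∀ j : Fin 3, Finsupp.single (xv p) (1:ℕ) (yv j) = 0 := by
      intro j; rw [Finsupp.single_apply, if_neg (xv_ne_yv p j)]
    simp [this, Pi.single_apply]

lemma single_deg_y (q : Fin 3) (i : Fin 2) :
    ∑ j, Finsupp.single (yv q) (1:ℕ) ⟨i, j⟩ = (Pi.single (1 : Fin 2) (1:ℕ) : Fin 2 → ℕ) i := by
  fin_cases i
  · show ∑ j : Fin 3, Finsupp.single (yv q) (1:ℕ) (xv j) = _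
    have : ∀ j : Fin 3, Finsupp.single (yv q) (1:ℕ) (xv j) = 0 := by
      intro j; rw [Finsupp.single_apply, if_neg (Ne.symm (xv_ne_yv j q))]
    simp [this, Pi.single_apply]
  · show ∑ j : Fin 3, Finsupp.single (yv q) (1:ℕ) (yv j) = _
    simp [Finsupp.single_apply, yv_inj, Pi.single_apply]

lemma X_mem_multiHomog_x (p : Fin 3) :
    (X (xv p) : MvPolynomial (MPVar 2 ![2,2]) k) ∈ multiHomog k 2 ![2,2] (Pi.single 0 1) :=
  Submodule.subset_span ⟨Finsupp.single (xv p) 1, single_deg_x p, rfl⟩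

lemma X_mem_multiHomog_y (q : Fin 3) :
    (X (yv q) : MvPolynomial (MPVar 2 ![2,2]) k) ∈ multiHomog k 2 ![2,2] (Pi.single 1 1) :=
  Submodule.subset_span ⟨Finsupp.single (yv q) 1, single_deg_y q, rfl⟩

lemma Aform_mem (v : (i : Fin 2) → Fin ((![2,2] : Fin 2 → ℕ) i + 1) → k) (p0 p : Fin 3) :
    Aform v p0 p ∈ mpPointIdeal k 2 ![2,2] v := by
  apply Ideal.subset_span
  refine ⟨⟨0, ?_⟩, ?_⟩
  · rw [Aform]
    apply sub_mem
    · rw [MvPolynomial.C_mul']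
      exact Submodule.smul_mem _ _ (X_mem_multiHomog_x p)
    · rw [MvPolynomial.C_mul']
      exact Submodule.smul_mem _ _ (X_mem_multiHomog_x p0)
  · rw [Aform]
    simp only [map_sub, map_mul, eval_C, MvPolynomial.eval_X]
    show v 0 p0 * v 0 p - v 0 p * v 0 p0 = 0
    ring

lemma Bform_mem (v : (i : Fin 2) → Fin ((![2,2] : Fin 2 → ℕ) i + 1) → k) (q0 q : Fin 3) :
    Bform v q0 q ∈ mpPointIdeal k 2 ![2,2] v := by
  apply Ideal.subset_span
  refine ⟨⟨1, ?_⟩, ?_⟩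
  · rw [Bform]
    apply sub_mem
    · rw [MvPolynomial.C_mul']
      exact Submodule.smul_mem _ _ (X_mem_multiHomog_y q)
    · rw [MvPolynomial.C_mul']
      exact Submodule.smul_mem _ _ (X_mem_multiHomog_y q0)
  · rw [Bform]
    simp only [map_sub, map_mul, eval_C, MvPolynomial.eval_X]
    show v 1 q0 * v 1 q - v 1 q * v 1 q0 = 0
    ring

lemma monomial_m11 (p q : Fin 3) (a : k) :
    (monomial (m11 p q) a : MvPolynomial (MPVar 2 ![2,2]) k) = C a * X (xv p) * X (yv q) := by
  rw [MvPolynomial.C_mul_X_eq_monomial,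
    show (X (yv q) : MvPolynomial (MPVar 2 ![2,2]) k) = monomial (Finsupp.single (yv q) 1) 1 from rfl,
    MvPolynomial.monomial_mul, m11, mul_one]

lemma F11_mem_pointIdeal (c : Fin 3 × Fin 3 → k)
    (v : (i : Fin 2) → Fin ((![2,2] : Fin 2 → ℕ) i + 1) → k)
    (p0 q0 : Fin 3) (hp0 : v 0 p0 ≠ 0) (hq0 : v 1 q0 ≠ 0)
    (hev : ∑ pq : Fin 3 × Fin 3, c pq * (v 0 pq.1 * v 1 pq.2) = 0) :
    F11 c ∈ mpPointIdeal k 2 ![2,2] v := by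
  have key : C (v 0 p0) * C (v 1 q0) * F11 c
      = (∑ pq : Fin 3 × Fin 3, C (c pq) *
          ((C (v 1 q0) * Aform v p0 pq.1) * X (yv pq.2)
            + (C (v 0 pq.1) * X (xv p0)) * Bform v q0 pq.2))
        + C (∑ pq : Fin 3 × Fin 3, c pq * (v 0 pq.1 * v 1 pq.2)) * (X (xv p0) * X (yv q0)) := by
    rw [F11, Finset.mul_sum, map_sum, Finset.sum_mul, ← Finset.sum_add_distrib]
    apply Finset.sum_congr rfl
    intro pq _
    rw [monomial_m11, Aform, Bform, map_mul, map_mul]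
    ring
  have hmem : C (v 0 p0) * C (v 1 q0) * F11 c ∈ mpPointIdeal k 2 ![2,2] v := by
    rw [key, hev, map_zero, zero_mul, add_zero]
    apply Ideal.sum_mem
    intro pq _
    apply Ideal.mul_mem_left
    apply add_mem
    · exact Ideal.mul_mem_right _ _ (Ideal.mul_mem_left _ _ (Aform_mem v p0 pq.1))
    · exact Ideal.mul_mem_left _ _ (Bform_mem v q0 pq.2)
  have hrw : F11 c = C ((v 0 p0 * v 1 q0)⁻¹) * (C (v 0 p0) * C (v 1 q0) * F11 c) := by
    rw [show C ((v 0 p0 * v 1 q0)⁻¹) * (C (v 0 p0) * C (v 1 q0) * F11 c)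
        = (C ((v 0 p0 * v 1 q0)⁻¹) * C (v 0 p0) * C (v 1 q0)) * F11 c from by ring,
      ← map_mul, ← map_mul,
      show (v 0 p0 * v 1 q0)⁻¹ * v 0 p0 * v 1 q0 = 1 from by
        rw [mul_assoc]; exact inv_mul_cancel₀ (mul_ne_zero hp0 hq0),
      map_one, one_mul]
  rw [hrw]
  exact Ideal.mul_mem_left _ _ hmem
lemma exists_ker {V W : Type} [AddCommGroup V] [Module k V] [AddCommGroup W] [Module k W]
    [FiniteDimensional k V] [FiniteDimensional k W] (f : V →ₗ[k] W)
    (h : Module.finrank k W < Module.finrank k V) : ∃ v, v ≠ 0 ∧ f v = 0 := by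
  by_contra hc
  push_neg at hc
  have hinj : Function.Injective f := by
    apply LinearMap.ker_eq_bot.mp
    apply (Submodule.eq_bot_iff _).mpr
    intro v hv
    by_contra h0
    exact hc v h0 hv
  exact absurd (LinearMap.finrank_le_finrank_of_injective hinj) (by omega)

lemma multiHomog_mul {a b c : Fin 2 → ℕ} (h : ∀ i, a i + b i = c i)
    {f g : MvPolynomial (MPVar 2 ![2,2]) k}
    (hf : f ∈ multiHomog k 2 ![2,2] a) (hg : g ∈ multiHomog k 2 ![2,2] b) :
    f * g ∈ multiHomog k 2 ![2,2] c := by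
  have hle : multiHomog k 2 ![2,2] a * multiHomog k 2 ![2,2] b ≤ multiHomog k 2 ![2,2] c := by
    rw [multiHomog, multiHomog, Submodule.span_mul_span, multiHomog]
    apply Submodule.span_le.mpr
    rintro s hs
    rw [Set.mem_mul] at hs
    obtain ⟨f1, hf1, g1, hg1, rfl⟩ := hs
    obtain ⟨m1, hm1, rfl⟩ := hf1
    obtain ⟨m2, hm2, rfl⟩ := hg1
    refine Submodule.subset_span ⟨m1 + m2, ?_, by rw [MvPolynomial.monomial_mul, one_mul]⟩
    intro i
    have hsum : ∑ j, (m1 + m2) ⟨i, j⟩ = (∑ j, m1 ⟨i,j⟩) + ∑ j, m2 ⟨i,j⟩ := by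
      simp [Finsupp.add_apply, Finset.sum_add_distrib]
    rw [hsum, hm1 i, hm2 i, h i]
  exact hle (Submodule.mul_mem_mul hf hg)

lemma exists_f1 (v : Fin 8 → (i : Fin 2) → Fin ((![2, 2] : Fin 2 → ℕ) i + 1) → k)
    (hv : ∀ j i, v j i ≠ 0) :
    ∃ f1 : MvPolynomial (MPVar 2 ![2,2]) k, f1 ≠ 0 ∧ f1 ∈ multiHomog k 2 ![2,2] ![1,1] ∧
      ∀ j, f1 ∈ mpPointIdeal k 2 ![2,2] (v j) := by
  let Φ : ((Fin 3 × Fin 3) → k) →ₗ[k] (Fin 8 → k) := {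
    toFun := fun c j => ∑ pq : Fin 3 × Fin 3, c pq * (v j 0 pq.1 * v j 1 pq.2)
    map_add' := by intro c1 c2; funext j; simp [add_mul, Finset.sum_add_distrib]
    map_smul' := by intro a c; funext j; simp [Finset.mul_sum, mul_assoc] }
  have hdim : Module.finrank k (Fin 8 → k) < Module.finrank k ((Fin 3 × Fin 3) → k) := by
    simp [Module.finrank_fintype_fun_eq_card]
  obtain ⟨c, hc0, hcΦ⟩ := exists_ker Φ hdim
  refine ⟨F11 c, ?_, F11_mem_multiHomog c, ?_⟩
  · intro h0
    apply hc0; funext pq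
    have hco := coeff_F11 c pq.1 pq.2
    rw [h0] at hco
    simpa using hco.symm
  · intro j
    obtain ⟨p0, hp0⟩ := Function.ne_iff.mp (hv j 0)
    obtain ⟨q0, hq0⟩ := Function.ne_iff.mp (hv j 1)
    exact F11_mem_pointIdeal c (v j) p0 q0 hp0 hq0 (by simpa [Φ] using congrFun hcΦ j)

lemma MPVar_ext (m1 m2 : MPVar 2 ![2,2] →₀ ℕ)
    (hx : ∀ p : Fin 3, m1 (xv p) = m2 (xv p)) (hy : ∀ q : Fin 3, m1 (yv q) = m2 (yv q)) :
    m1 = m2 := by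
  apply Finsupp.ext
  intro s
  rcases s with ⟨i, j⟩
  revert j
  refine Fin.cases ?_ ?_ i
  · intro j; exact hx j
  · intro i1 j
    have h1 : i1 = 0 := Subsingleton.elim _ _
    subst h1
    exact hy j

def ρ36 : Type := {pp : Fin 3 × Fin 3 // pp.1 ≤ pp.2} × {qq : Fin 3 × Fin 3 // qq.1 ≤ qq.2}

instance : Fintype ρ36 := by unfold ρ36; infer_instance

lemma card_ρ36 : Fintype.card ρ36 = 36 := by decide

def m22 (p p' q q' : Fin 3) : MPVar 2 ![2,2] →₀ ℕ := m11 p q + m11 p' q'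

def Ψ : ρ36 → MvPolynomial (MPVar 2 ![2,2]) k :=
  fun r => monomial (m22 r.1.1.1 r.1.1.2 r.2.1.1 r.2.1.2) 1

lemma mh22_le : multiHomog k 2 ![2,2] ![2,2] ≤ Submodule.span k (Set.range (Ψ (k := k))) := by
  apply Submodule.span_le.mpr
  rintro f ⟨m, hm, rfl⟩
  have h0 : ∑ j : Fin 3, m (xv j) = 2 := hm 0
  have h1 : ∑ j : Fin 3, m (yv j) = 2 := hm 1
  rw [Fin.sum_univ_three] at h0 h1
  obtain ⟨p, p', hpp, hp0, hp1, hp2⟩ := decomp2' _ _ _ h0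
  obtain ⟨q, q', hqq, hq0, hq1, hq2⟩ := decomp2' _ _ _ h1
  have hmeq : m = m22 p p' q q' := by
    apply MPVar_ext
    · intro j
      have : m22 p p' q q' (xv j) = e p j + e p' j := by
        rw [m22, Finsupp.add_apply, m11_apply_x, m11_apply_x]
      rw [this]
      fin_cases j
      · exact hp0
      · exact hp1
      · exact hp2
    · intro j
      have : m22 p p' q q' (yv j) = e q j + e q' j := by
        rw [m22, Finsupp.add_apply, m11_apply_y, m11_apply_y]
      rw [this]
      fin_cases j
      · exact hq0
      · exact hq1
      · exact hq2
  rw [hmeq]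
  exact Submodule.subset_span ⟨(⟨(p, p'), hpp⟩, ⟨(q, q'), hqq⟩), rfl⟩

lemma finrank_mh22_le :
    Module.finrank k (multiHomog k 2 ![2,2] ![2,2]) ≤ 36 := by
  haveI : DecidableEq (MvPolynomial (MPVar 2 ![2,2]) k) := Classical.decEq _
  haveI : FiniteDimensional k (Submodule.span k (Set.range (Ψ (k := k)))) :=
    FiniteDimensional.span_of_finite _ (Set.finite_range _)
  refine le_trans (Submodule.finrank_mono (mh22_le (k := k))) ?_
  refine le_trans (finrank_span_le_card _) ?_
  rw [Set.toFinset_range]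
  refine le_trans (Finset.card_image_le) ?_
  simp [card_ρ36]
lemma conjunct1 (v : Fin 8 → (i : Fin 2) → Fin ((![2, 2] : Fin 2 → ℕ) i + 1) → k)
    (hv : ∀ j i, v j i ≠ 0) :
    ∃ f1 f2 f : MvPolynomial (MPVar 2 ![2, 2]) k,
        f ≠ 0 ∧ f ∈ multiHomog k 2 ![2, 2] ![2, 2] ∧
        (∀ j, f ∈ (mpPointIdeal k 2 ![2, 2] (v j)) ^ 2) ∧
        f1 ∈ multiHomog k 2 ![2, 2] ![1, 1] ∧ f2 ∈ multiHomog k 2 ![2, 2] ![1, 1] ∧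
        (∀ j, f1 ∈ mpPointIdeal k 2 ![2, 2] (v j)) ∧
        (∀ j, f2 ∈ mpPointIdeal k 2 ![2, 2] (v j)) ∧
        f = f1 * f2 := by
  obtain ⟨f1, h0, hmh, hpt⟩ := exists_f1 v hv
  exact ⟨f1, f1, f1 * f1, mul_ne_zero h0 h0,
    multiHomog_mul (by decide) hmh hmh,
    fun j => by rw [pow_two]; exact Ideal.mul_mem_mul (hpt j) (hpt j),
    hmh, hmh, hpt, hpt, rfl⟩

lemma conjunct2 (v : Fin 8 → (i : Fin 2) → Fin ((![2, 2] : Fin 2 → ℕ) i + 1) → k)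
    (hv : ∀ j i, v j i ≠ 0) :
    Module.finrank k (multiHomog k 2 ![2, 2] ![2, 2]) -
      Module.finrank k
        (mIdealPiece k (⨅ j, (mpPointIdeal k 2 ![2, 2] (v j)) ^ 2) ![2, 2]) ≤ 35 := by
  obtain ⟨f1, h0, hmh, hpt⟩ := exists_f1 v hv
  set f := f1 * f1 with hf
  have hf0 : f ≠ 0 := mul_ne_zero h0 h0
  have hfM : f ∈ multiHomog k 2 ![2,2] ![2,2] := multiHomog_mul (by decide) hmh hmh
  set P := mIdealPiece k (⨅ j, (mpPointIdeal k 2 ![2, 2] (v j)) ^ 2) ![2, 2] with hP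
  have hPle : P ≤ multiHomog k 2 ![2,2] ![2,2] := inf_le_right
  have hfP : f ∈ P := by
    refine Submodule.mem_inf.mpr ⟨?_, hfM⟩
    rw [Submodule.restrictScalars_mem]
    exact Ideal.mem_iInf.mpr fun j => by
      rw [pow_two]; exact Ideal.mul_mem_mul (hpt j) (hpt j)
  haveI : DecidableEq (MvPolynomial (MPVar 2 ![2,2]) k) := Classical.decEq _
  haveI hfd : FiniteDimensional k (Submodule.span k (Set.range (Ψ (k := k)))) :=
    FiniteDimensional.span_of_finite _ (Set.finite_range _)
  haveI : Module.Finite k P :=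
    Submodule.finiteDimensional_of_le (le_trans hPle (mh22_le (k := k)))
  have hpos : 0 < Module.finrank k P := by
    rw [Module.finrank_pos_iff]
    exact ⟨⟨⟨f, hfP⟩, 0, fun hcon => hf0 (by simpa [Subtype.ext_iff] using hcon)⟩⟩
  have h36 := finrank_mh22_le (k := k)
  omega
section ChainKey
variable {R : Type} [CommRing R] [Algebra k R]

lemma chain_key : ∀ (m : ℕ) (p : Fin (m+1) → Ideal R), (∀ i, (p i).IsPrime) →
    (∀ i : Fin m, p i.castSucc ≤ p i.succ) →
    ∀ x : Fin m → R, (∀ i, x i ∈ p i.succ) → (∀ i, x i ∉ p i.castSucc) →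
    ∀ Q : MvPolynomial (Fin m) k, Q ≠ 0 → (aeval x) Q ∉ p 0 := by
  intro m
  induction m with
  | zero =>
    intro p hp _ x _ _ Q hQ hmem
    obtain ⟨c, rfl⟩ := MvPolynomial.C_surjective (Fin 0) Q
    have hc : c ≠ 0 := fun h => hQ (by rw [h, map_zero])
    have hu : IsUnit ((aeval x) (C c)) := by
      rw [MvPolynomial.aeval_C]
      exact (IsUnit.mk0 c hc).map (algebraMap k R)
    exact (hp 0).ne_top (Ideal.eq_top_of_isUnit_mem _ hmem hu)
  | succ n ih =>
    intro p hp hchain x hx1 hx2 Q hQ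
    set x' : Fin n → R := fun i => x i.succ with hx'
    set p' : Fin (n+1) → Ideal R := fun j => p j.succ with hp'def
    have hp' : ∀ j, (p' j).IsPrime := fun j => hp _
    have hcs : ∀ i : Fin n, (i.succ : Fin (n+1)).castSucc = (i.castSucc).succ := by
      intro i; ext; simp
    have hchain' : ∀ i : Fin n, p' i.castSucc ≤ p' i.succ := by
      intro i
      have h := hchain i.succ
      rw [hcs i] at h
      exact h
    have hx1' : ∀ i, x' i ∈ p' i.succ := fun i => hx1 i.succ
    have hx2' : ∀ i, x' i ∉ p' i.castSucc := by
      intro i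
      have h := hx2 i.succ
      rw [hcs i] at h
      exact h
    have hbase : ∀ a : MvPolynomial (Fin n) k, a ≠ 0 → (aeval x') a ∉ p 1 := by
      intro a ha
      have h := ih p' hp' hchain' x' hx1' hx2' a ha
      have e0 : p' 0 = p 1 := by show p (Fin.succ 0) = p 1; rw [Fin.succ_zero_eq_one]
      rwa [e0] at h
    have h01 : p 0 ≤ p 1 := by
      have h := hchain 0
      rwa [Fin.castSucc_zero, Fin.succ_zero_eq_one] at h
    have hx00 : x 0 ∉ p 0 := by
      have h := hx2 0
      rwa [Fin.castSucc_zero] at h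
    have hx01 : x 0 ∈ p 1 := by
      have h := hx1 0
      rwa [Fin.succ_zero_eq_one] at h
    set ψ : Polynomial (MvPolynomial (Fin n) k) →+* R :=
      Polynomial.eval₂RingHom ((aeval x' : MvPolynomial (Fin n) k →ₐ[k] R) : MvPolynomial (Fin n) k →+* R) (x 0) with hψ
    have heval : ∀ q : MvPolynomial (Fin (n+1)) k, ψ (MvPolynomial.finSuccEquiv k n q) = (aeval x) q := by
      intro q
      induction q using MvPolynomial.induction_on with
      | C a => simp [hψ, MvPolynomial.finSuccEquiv_apply]
      | add f g hf hg => rw [map_add, map_add, hf, hg, map_add]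
      | mul_X f i hf =>
        rw [map_mul, map_mul, hf, map_mul]
        congr 1
        refine Fin.cases ?_ ?_ i
        · rw [MvPolynomial.finSuccEquiv_X_zero]
          simp [hψ]
        · intro j
          rw [MvPolynomial.finSuccEquiv_X_succ]
          simp [hψ, hx']
    have main : ∀ (N : ℕ) (P : Polynomial (MvPolynomial (Fin n) k)),
        P.natDegree ≤ N → P ≠ 0 → ψ P ∉ p 0 := by
      intro N
      induction N with
      | zero =>
        intro P hdeg hP0 hmem
        have hc : P.coeff 0 ≠ 0 := fun h => hP0 (by
          rw [Polynomial.eq_C_of_natDegree_le_zero hdeg, h, map_zero])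
        have hrw : ψ P = (aeval x') (P.coeff 0) := by
          conv_lhs => rw [Polynomial.eq_C_of_natDegree_le_zero hdeg]
          simp [hψ]
        rw [hrw] at hmem
        exact hbase _ hc (h01 hmem)
      | succ N ihN =>
        intro P hdeg hP0 hmem
        by_cases hc0 : P.coeff 0 = 0
        · have hPX : P = Polynomial.X * P.divX := by
            conv_lhs => rw [← Polynomial.X_mul_divX_add P]
            rw [hc0, map_zero, add_zero]
          have hdiv0 : P.divX ≠ 0 := fun h => hP0 (by rw [hPX, h, mul_zero])
          have hdegd : P.divX.natDegree ≤ N := by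
            rw [Polynomial.natDegree_divX_eq_natDegree_tsub_one]
            omega
          have : ψ P = x 0 * ψ P.divX := by
            conv_lhs => rw [hPX]
            rw [map_mul]
            congr 1
            simp [hψ]
          rw [this] at hmem
          rcases (hp 0).mem_or_mem hmem with h | h
          · exact hx00 h
          · exact ihN P.divX hdegd hdiv0 h
        · have hPid : P = Polynomial.X * P.divX + Polynomial.C (P.coeff 0) :=
            (Polynomial.X_mul_divX_add P).symm
          have hψP : ψ P = x 0 * ψ P.divX + (aeval x') (P.coeff 0) := by
            conv_lhs => rw [hPid]
            rw [map_add, map_mul]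
            congr 1
            · congr 1; simp [hψ]
            · simp [hψ]
          have hmem1 : (aeval x') (P.coeff 0) ∈ p 1 := by
            have hP1 : ψ P ∈ p 1 := h01 hmem
            have hx0ψ : x 0 * ψ P.divX ∈ p 1 := Ideal.mul_mem_right _ _ hx01
            have := Ideal.sub_mem _ hP1 hx0ψ
            rw [hψP] at this
            simpa using this
          exact hbase _ hc0 hmem1
    intro hmem
    have hP0 : MvPolynomial.finSuccEquiv k n Q ≠ 0 := by
      intro h
      apply hQ
      have := congrArg (MvPolynomial.finSuccEquiv k n).symm h
      simpa using this
    exact main _ _ le_rfl hP0 (by rwa [heval Q])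

end ChainKey
section AlgDep
variable {σ : Type} [Fintype σ]

lemma exists_algdep (N : ℕ) (hN : Fintype.card σ < N) (x : Fin N → MvPolynomial σ k) :
    ∃ Q : MvPolynomial (Fin N) k, Q ≠ 0 ∧ aeval x Q = 0 := by
  classical
  set n := Fintype.card σ with hn
  set h := Finset.univ.sup (fun i => (x i).totalDegree) with hh
  set E := (N*h+1)^n with hE
  set M := N*E*h with hM
  have hineq : (M+1)^n < (E+1)^N := by
    have h1 : M+1 ≤ (N*h+1)*(E+1) := by
      have hex : (N*h+1)*(E+1) = N*E*h + (N*h + E + 1) := by ring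
      rw [hM, hex]
      omega
    calc (M+1)^n ≤ ((N*h+1)*(E+1))^n := Nat.pow_le_pow_left h1 n
      _ = (N*h+1)^n * (E+1)^n := mul_pow _ _ n
      _ = E * (E+1)^n := by rw [hE]
      _ < (E+1) * (E+1)^n := by
          have hpos : (0:ℕ) < (E+1)^n := pow_pos (by omega) n
          exact (Nat.mul_lt_mul_right hpos).mpr (by omega)
      _ = (E+1)^(n+1) := by rw [pow_succ, mul_comm]
      _ ≤ (E+1)^N := Nat.pow_le_pow_right (by omega) (by omega)
  set U := Submodule.span k (Set.range (fun g : σ → Fin (M+1) =>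
    (monomial (Finsupp.equivFunOnFinite.symm (fun s => (g s : ℕ))) (1:k) : MvPolynomial σ k)))
    with hUdef
  have hU : ∀ f : MvPolynomial σ k, f.totalDegree ≤ M → f ∈ U := by
    intro f hf
    rw [← MvPolynomial.support_sum_monomial_coeff f]
    apply Submodule.sum_mem
    intro u hu
    have hub : ∀ s, u s ≤ M := by
      intro s
      by_cases hs : s ∈ u.support
      · calc u s ≤ ∑ a ∈ u.support, u a :=
              Finset.single_le_sum (f := fun a => u a) (fun a _ => Nat.zero_le (u a)) hs
          _ = u.sum (fun _ e => e) := rfl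
          _ ≤ f.totalDegree := MvPolynomial.le_totalDegree hu
          _ ≤ M := hf
      · simp [Finsupp.notMem_support_iff.mp hs]
    have hmono : (monomial u (coeff u f) : MvPolynomial σ k) = coeff u f • monomial u (1:k) := by
      rw [MvPolynomial.smul_monomial, smul_eq_mul, mul_one]
    rw [hmono]
    apply Submodule.smul_mem
    apply Submodule.subset_span
    refine ⟨fun s => ⟨u s, by have := hub s; omega⟩, ?_⟩
    dsimp only
    have heq : (Finsupp.equivFunOnFinite.symm fun s => u s) = u :=
      Finsupp.equivFunOnFinite.symm_apply_apply u
    rw [heq]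
  haveI hUfin : FiniteDimensional k U := FiniteDimensional.span_of_finite _ (Set.finite_range _)
  have hUrank : Module.finrank k U ≤ (M+1)^n := by
    refine le_trans (finrank_span_le_card _) ?_
    rw [Set.toFinset_range]
    refine le_trans Finset.card_image_le ?_
    simp [Fintype.card_fun, hn]
  set P : (Fin N → Fin (E+1)) → MvPolynomial σ k := fun m => ∏ i, (x i)^((m i : ℕ)) with hP
  have hPdeg : ∀ m, (P m).totalDegree ≤ M := by
    intro m
    refine le_trans (MvPolynomial.totalDegree_finset_prod _ _) ?_
    calc ∑ i, ((x i)^((m i : ℕ))).totalDegree ≤ ∑ _i : Fin N, E * h := by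
          apply Finset.sum_le_sum
          intro i _
          refine le_trans (MvPolynomial.totalDegree_pow _ _) ?_
          have h1 : (m i : ℕ) ≤ E := by have := (m i).isLt; omega
          have h2 : (x i).totalDegree ≤ h := Finset.le_sup (f := fun i => (x i).totalDegree) (Finset.mem_univ i)
          exact Nat.mul_le_mul h1 h2
      _ = N * (E * h) := by simp [Finset.sum_const, Finset.card_univ]
      _ = M := by rw [hM]; ring
  set Λ : ((Fin N → Fin (E+1)) → k) →ₗ[k] MvPolynomial σ k :=
    ∑ m : Fin N → Fin (E+1), LinearMap.smulRight (LinearMap.proj m) (P m) with hΛdef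
  have hΛ : ∀ c, Λ c = ∑ m : Fin N → Fin (E+1), c m • P m := by
    intro c
    rw [hΛdef, LinearMap.sum_apply]
    apply Finset.sum_congr rfl
    intro m _
    rw [LinearMap.smulRight_apply, LinearMap.proj_apply]
  have hΛU : ∀ c, Λ c ∈ U := fun c => by
    rw [hΛ]; exact Submodule.sum_mem _ fun m _ => Submodule.smul_mem _ _ (hU _ (hPdeg m))
  have hdim : Module.finrank k U < Module.finrank k ((Fin N → Fin (E+1)) → k) := by
    rw [Module.finrank_fintype_fun_eq_card, Fintype.card_fun]
    calc Module.finrank k U ≤ (M+1)^n := hUrank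
      _ < (E+1)^N := hineq
      _ = Fintype.card (Fin (E+1)) ^ Fintype.card (Fin N) := by simp
  obtain ⟨c, hc0, hcΛ⟩ := exists_ker (LinearMap.codRestrict U Λ hΛU) hdim
  have hΛc0 : Λ c = 0 := by
    have := congrArg (Submodule.subtype U) hcΛ
    simpa using this
  set expmap : (Fin N → Fin (E+1)) → (Fin N →₀ ℕ) :=
    fun m => Finsupp.equivFunOnFinite.symm (fun i => (m i : ℕ)) with hexp
  have hexpinj : Function.Injective expmap := by
    intro m1 m2 hm
    funext i
    have := congrArg (fun u => (u : (Fin N →₀ ℕ)) i) hm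
    simp only [hexp, Finsupp.coe_equivFunOnFinite_symm] at this
    exact Fin.ext this
  set Q : MvPolynomial (Fin N) k :=
    ∑ m : Fin N → Fin (E+1), monomial (expmap m) (c m) with hQdef
  have hQx : aeval x Q = Λ c := by
    rw [hQdef, map_sum, hΛ]
    apply Finset.sum_congr rfl
    intro m _
    rw [MvPolynomial.aeval_monomial]
    rw [Finsupp.prod_fintype _ _ (fun i => pow_zero _)]
    have : ∀ i, expmap m i = (m i : ℕ) := by
      intro i; simp [hexp]
    simp only [this]
    rw [MvPolynomial.algebraMap_eq, ← MvPolynomial.C_mul', hP]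
  have hQ0 : Q ≠ 0 := by
    obtain ⟨m0, hm0⟩ : ∃ m0, c m0 ≠ 0 := by
      by_contra hall
      push_neg at hall
      exact hc0 (funext fun m => hall m)
    intro hQz
    have hco : coeff (expmap m0) Q = c m0 := by
      rw [hQdef, MvPolynomial.coeff_sum]
      rw [Finset.sum_eq_single m0]
      · rw [MvPolynomial.coeff_monomial, if_pos rfl]
      · intro m _ hne
        rw [MvPolynomial.coeff_monomial, if_neg (fun hc => hne (hexpinj hc))]
      · intro habs
        exact absurd (Finset.mem_univ m0) habs
    rw [hQz] at hco
    simp at hco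
    exact hm0 hco.symm
  exact ⟨Q, hQ0, by rw [hQx, hΛc0]⟩

end AlgDep
section Det

abbrev ιSV : Type := SVIdx 2 ![2,2] ![2,2]

def dpair (u w : Fin 3 → ℕ) : (i : Fin 2) → Fin ((![2,2] : Fin 2 → ℕ) i + 1) → ℕ :=
  fun i => Fin.cases (motive := fun i => Fin ((![2,2] : Fin 2 → ℕ) i + 1) → ℕ) u
    (fun i1 => Fin.cases
      (motive := fun i1 : Fin 1 => Fin ((![2,2] : Fin 2 → ℕ) i1.succ + 1) → ℕ)
      w (fun i2 => i2.elim0) i1) i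

lemma dpair_zero (u w : Fin 3 → ℕ) : dpair u w 0 = u := rfl
lemma dpair_one (u w : Fin 3 → ℕ) : dpair u w 1 = w := rfl

lemma dext (d1 d2 : (i : Fin 2) → Fin ((![2,2] : Fin 2 → ℕ) i + 1) → ℕ)
    (h0 : ∀ j : Fin 3, d1 0 j = d2 0 j) (h1 : ∀ j : Fin 3, d1 1 j = d2 1 j) : d1 = d2 := by
  funext i
  refine Fin.cases ?_ ?_ i
  · funext j; exact h0 j
  · intro i1
    refine Fin.cases (motive := fun i1 : Fin 1 => d1 i1.succ = d2 i1.succ) ?_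
      (fun i2 => i2.elim0) i1
    funext j; exact h1 j

def idx (p p' q q' : Fin 3) : ιSV :=
  ⟨dpair (fun j => e p j + e p' j) (fun j => e q j + e q' j), by
    refine Fin.forall_fin_two.mpr ⟨?_, ?_⟩
    · show ∑ j : Fin 3, (e p j + e p' j) = 2
      rw [Finset.sum_add_distrib, sum_e, sum_e]
    · show ∑ j : Fin 3, (e q j + e q' j) = 2
      rw [Finset.sum_add_distrib, sum_e, sum_e]⟩

lemma idx_fst (p p' q q' : Fin 3) : ∀ j : Fin 3, (idx p p' q q').1 0 j = e p j + e p' j :=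
  fun _ => rfl

lemma idx_snd (p p' q q' : Fin 3) : ∀ j : Fin 3, (idx p p' q q').1 1 j = e q j + e q' j :=
  fun _ => rfl

lemma idx_surj : Function.Surjective (fun r : ρ36 => idx r.1.1.1 r.1.1.2 r.2.1.1 r.2.1.2) := by
  rintro ⟨d, hd⟩
  have h0 : ∑ j : Fin 3, d 0 j = 2 := hd 0
  have h1 : ∑ j : Fin 3, d 1 j = 2 := hd 1
  erw [Fin.sum_univ_three] at h0 h1
  obtain ⟨p, p', hpp, hp0, hp1, hp2⟩ := decomp2' _ _ _ h0
  obtain ⟨q, q', hqq, hq0, hq1, hq2⟩ := decomp2' _ _ _ h1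
  refine ⟨⟨⟨(p, p'), hpp⟩, ⟨(q, q'), hqq⟩⟩, ?_⟩
  apply Subtype.ext
  apply dext
  · intro j
    rw [idx_fst]
    fin_cases j
    · exact hp0.symm
    · exact hp1.symm
    · exact hp2.symm
  · intro j
    rw [idx_snd]
    fin_cases j
    · exact hq0.symm
    · exact hq1.symm
    · exact hq2.symm

noncomputable instance : Fintype ιSV := Fintype.ofSurjective _ idx_surj

lemma card_ιSV_le : Fintype.card ιSV ≤ 36 :=
  le_trans (Fintype.card_le_of_surjective _ idx_surj) (le_of_eq card_ρ36)

def MX : Matrix (Fin 3 × Fin 3) (Fin 3 × Fin 3) (MvPolynomial ιSV k) :=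
  fun r c => X (idx r.1 c.1 r.2 c.2)

def Fdet : MvPolynomial ιSV k := (MX (k := k)).det

def v0 : ιSV → k := fun d => if (∀ i j, d.1 i j ≠ 1) then 1 else 0

lemma e_diag : ∀ p p' : Fin 3, ((∀ j, e p j + e p' j ≠ 1) ↔ p = p') := by decide

lemma idx_diag (p p' q q' : Fin 3) :
    (∀ i j, (idx p p' q q').1 i j ≠ 1) ↔ (p = p' ∧ q = q') := by
  constructor
  · intro hd
    constructor
    · exact (e_diag p p').mp (fun j => by have := hd 0 j; rwa [idx_fst] at this)
    · exact (e_diag q q').mp (fun j => by have := hd 1 j; rwa [idx_snd] at this)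
  · rintro ⟨rfl, rfl⟩
    refine Fin.forall_fin_two.mpr ⟨?_, ?_⟩
    · intro j
      erw [idx_fst]
      exact (e_diag p p).mpr rfl j
    · intro j
      erw [idx_snd]
      exact (e_diag q q).mpr rfl j

lemma eval_v0_Fdet : eval (v0 (k := k)) (Fdet (k := k)) = 1 := by
  rw [Fdet, RingHom.map_det, RingHom.mapMatrix_apply]
  have hone : (MX (k := k)).map (eval (v0 (k := k))) = 1 := by
    ext r c
    show eval (v0 (k := k)) (X (idx r.1 c.1 r.2 c.2)) = (1 : Matrix (Fin 3 × Fin 3) (Fin 3 × Fin 3) k) r c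
    rw [MvPolynomial.eval_X]
    show (if (∀ i j, (idx r.1 c.1 r.2 c.2).1 i j ≠ 1) then (1:k) else 0) = _
    rw [Matrix.one_apply]
    rcases eq_or_ne r c with rfl | hrc
    · rw [if_pos ((idx_diag r.1 r.1 r.2 r.2).mpr ⟨rfl, rfl⟩), if_pos rfl]
    · rw [if_neg (fun hcond => hrc (Prod.ext_iff.mpr ((idx_diag _ _ _ _).mp hcond))),
        if_neg hrc]
  rw [hone, Matrix.det_one]

lemma Fdet_ne_zero : (Fdet (k := k)) ≠ 0 := fun h => by
  have he := eval_v0_Fdet (k := k)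
  rw [h, map_zero] at he
  exact zero_ne_one he

def νSV (u : (i : Fin 2) → Fin ((![2,2] : Fin 2 → ℕ) i + 1) → k) : ιSV → k :=
  fun d => ∏ i, ∏ j, u i j ^ d.1 i j

lemma nu_idx (u : (i : Fin 2) → Fin ((![2,2] : Fin 2 → ℕ) i + 1) → k) (p p' q q' : Fin 3) :
    νSV u (idx p p' q q') = (u 0 p * u 0 p') * (u 1 q * u 1 q') := by
  rw [νSV, Fin.prod_univ_two]
  have hx : ∏ j, u 0 j ^ (idx p p' q q').1 0 j = u 0 p * u 0 p' := by
    have he : ∀ j : Fin 3, u 0 j ^ (idx p p' q q').1 0 j = u 0 j ^ e p j * u 0 j ^ e p' j := by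
      intro j; rw [idx_fst, pow_add]
    rw [show (∏ j, u 0 j ^ (idx p p' q q').1 0 j) = ∏ j : Fin 3, (u 0 j ^ e p j * u 0 j ^ e p' j)
      from Finset.prod_congr rfl (fun j _ => he j)]
    rw [Finset.prod_mul_distrib]; erw [prod_pow_e, prod_pow_e]
  have hy : ∏ j, u 1 j ^ (idx p p' q q').1 1 j = u 1 q * u 1 q' := by
    have he : ∀ j : Fin 3, u 1 j ^ (idx p p' q q').1 1 j = u 1 j ^ e q j * u 1 j ^ e q' j := by
      intro j; rw [idx_snd, pow_add]
    rw [show (∏ j, u 1 j ^ (idx p p' q q').1 1 j) = ∏ j : Fin 3, (u 1 j ^ e q j * u 1 j ^ e q' j)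
      from Finset.prod_congr rfl (fun j _ => he j)]
    rw [Finset.prod_mul_distrib]; erw [prod_pow_e, prod_pow_e]
  rw [hx, hy]

lemma det_vanish (c : Fin 8 → k) (u : Fin 8 → (i : Fin 2) → Fin ((![2,2] : Fin 2 → ℕ) i + 1) → k)
    (w : ιSV → k) (hw : ∀ d, w d = ∑ i, c i * νSV (u i) d) :
    ((MX (k := k)).map (eval w)).det = 0 := by
  classical
  set f : Fin 8 → ((Fin 3 × Fin 3) → k) := fun i pq => u i 0 pq.1 * u i 1 pq.2 with hf
  set A := (MX (k := k)).map (eval w) with hA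
  have hAe : ∀ r cc : Fin 3 × Fin 3, A r cc = ∑ i, (c i * f i cc) * f i r := by
    intro r cc
    rw [hA, Matrix.map_apply, MX, MvPolynomial.eval_X, hw]
    apply Finset.sum_congr rfl
    intro i _
    rw [nu_idx, hf]
    ring
  set W := Submodule.span k (Set.range f) with hW
  haveI : FiniteDimensional k W := FiniteDimensional.span_of_finite _ (Set.finite_range _)
  have hWrank : Module.finrank k W ≤ 8 := by
    refine le_trans (finrank_span_le_card _) ?_
    rw [Set.toFinset_range]
    refine le_trans Finset.card_image_le ?_
    simp
  have hcol : ∀ cc, (fun r => A r cc) ∈ W := by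
    intro cc
    have hsum : (fun r => A r cc) = ∑ i, (c i * f i cc) • f i := by
      funext r
      rw [Finset.sum_apply]
      rw [hAe r cc]
      apply Finset.sum_congr rfl
      intro i _
      rw [Pi.smul_apply, smul_eq_mul]
    rw [hsum]
    exact Submodule.sum_mem _ fun i _ =>
      Submodule.smul_mem _ _ (Submodule.subset_span (Set.mem_range_self i))
  have hnli : ¬ LinearIndependent k (fun cc : Fin 3 × Fin 3 => (fun r => A r cc)) := by
    intro hli
    have hli' : LinearIndependent k (fun cc : Fin 3 × Fin 3 =>
        (⟨fun r => A r cc, hcol cc⟩ : W)) := by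
      apply LinearIndependent.of_comp (W.subtype)
      exact hli
    have h9 := hli'.fintype_card_le_finrank
    simp only [Fintype.card_prod, Fintype.card_fin] at h9
    omega
  obtain ⟨g, hg0, i0, hgi⟩ := Fintype.not_linearIndependent_iff.mp hnli
  apply Matrix.exists_mulVec_eq_zero_iff.mp
  refine ⟨g, fun hgz => hgi (by rw [hgz]; rfl), ?_⟩
  funext r
  have hr := congrFun hg0 r
  rw [Finset.sum_apply] at hr
  show (A.mulVec g) r = 0
  rw [Matrix.mulVec, dotProduct]
  rw [show ∑ j, A r j * g j = ∑ j, (g j • (fun r' => A r' j)) r from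
    Finset.sum_congr rfl (fun j _ => by rw [Pi.smul_apply, smul_eq_mul, mul_comm])]
  simpa using hr

end Det
section Conj3

lemma eval_zero_Fdet : eval (0 : ιSV → k) (Fdet (k := k)) = 0 := by
  rw [Fdet, RingHom.map_det, RingHom.mapMatrix_apply]
  have hz : (MX (k := k)).map (eval (0 : ιSV → k)) = 0 := by
    ext r c
    show eval (0 : ιSV → k) (X (idx r.1 c.1 r.2 c.2)) = 0
    rw [MvPolynomial.eval_X]
    rfl
  rw [hz, Matrix.det_zero]

lemma Fdet_mem_secant_ideal :
    (Fdet (k := k)) ∈ projIdeal k (secantSet k (segreVeronese k 2 ![2,2] ![2,2]) 8) := by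
  rw [projIdeal, MvPolynomial.mem_vanishingIdeal_iff]
  intro z hz
  simp only [pcone, Set.mem_union, Set.mem_setOf_eq, Set.mem_singleton_iff] at hz
  rcases hz with ⟨hvne, hmem⟩ | rfl
  swap
  · exact eval_zero_Fdet
  obtain ⟨P, hP, w, hw, heq, hspan⟩ := hmem
  choose u hune hex using hP
  choose hνne hPeq using hex
  have hspan2 : w ∈ Submodule.span k (Set.range fun i => νSV (u i)) := by
    refine Submodule.span_le.mpr ?_ hspan
    rintro _ ⟨i, rfl⟩
    show (P i).rep ∈ (Submodule.span k (Set.range fun i => νSV (u i)) : Set (ιSV → k))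
    have hmk : Projectivization.mk k ((P i).rep) ((P i).rep_nonzero)
        = Projectivization.mk k (νSV (u i)) (hνne i) := by
      rw [Projectivization.mk_rep]; exact hPeq i
    obtain ⟨a, ha⟩ := (Projectivization.mk_eq_mk_iff _ _ _ _ _).mp hmk
    rw [← ha]
    exact Submodule.smul_mem _ _ (Submodule.subset_span (Set.mem_range_self i))
  rw [Finsupp.mem_span_range_iff_exists_finsupp] at hspan2
  obtain ⟨cc, hcc⟩ := hspan2
  have hwd : ∀ dd, w dd = ∑ i, cc i * νSV (u i) dd := by
    intro dd
    rw [← hcc]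
    rw [Finsupp.sum_fintype _ _ (fun i => by rw [zero_smul])]
    rw [Finset.sum_apply]
    apply Finset.sum_congr rfl
    intro i _
    rw [Pi.smul_apply, smul_eq_mul]
  obtain ⟨a, ha⟩ := (Projectivization.mk_eq_mk_iff _ _ _ _ _).mp heq
  show eval z (Fdet (k := k)) = 0
  rw [Fdet, RingHom.map_det, RingHom.mapMatrix_apply]
  have hZ : (MX (k := k)).map (eval z) = (a : k) • (MX (k := k)).map (eval w) := by
    ext r c
    rw [Matrix.smul_apply, Matrix.map_apply, Matrix.map_apply]
    show eval z (X _) = (a : k) • eval w (X _)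
    rw [MvPolynomial.eval_X, MvPolynomial.eval_X, ← ha]
    rw [Pi.smul_apply]
    rfl
  rw [hZ, Matrix.det_smul, det_vanish cc u w hwd, mul_zero]

lemma Fdet_mem_variety_ideal :
    (Fdet (k := k)) ∈ projIdeal k (secantVariety k (segreVeronese k 2 ![2,2] ![2,2]) 8) := by
  rw [projIdeal, MvPolynomial.mem_vanishingIdeal_iff]
  intro z hz
  simp only [pcone, Set.mem_union, Set.mem_setOf_eq, Set.mem_singleton_iff] at hz
  rcases hz with ⟨hvne, hmem⟩ | rfl
  swap
  · exact eval_zero_Fdet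
  exact hmem (Fdet (k := k)) Fdet_mem_secant_ideal z hvne rfl

lemma conjunct3 (d : ℕ)
    (hd : HasDim k (secantVariety k (segreVeronese k 2 ![2,2] ![2,2]) 8) d) : d ≤ 34 := by
  by_contra hlt
  push_neg at hlt
  set I := projIdeal k (secantVariety k (segreVeronese k 2 ![2,2] ![2,2]) 8) with hI
  have hnb : ringKrullDim (MvPolynomial ιSV k ⧸ I) = ((d + 1 : ℕ) : WithBot (WithTop ℕ)) := hd
  obtain ⟨ch, hch⟩ : ∃ p : LTSeries (PrimeSpectrum (MvPolynomial ιSV k ⧸ I)), 36 ≤ p.length := by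
    by_contra hno
    push_neg at hno
    have hsup : ringKrullDim (MvPolynomial ιSV k ⧸ I) ≤ ((35 : ℕ) : WithBot (WithTop ℕ)) := by
      show (⨆ (p : LTSeries (PrimeSpectrum (MvPolynomial ιSV k ⧸ I))),
        (p.length : WithBot (WithTop ℕ))) ≤ _
      refine iSup_le fun p => ?_
      have hp35 : p.length ≤ 35 := by have := hno p; omega
      exact_mod_cast hp35
    rw [hnb] at hsup
    have hc : d + 1 ≤ 35 := Nat.cast_le.mp hsup
    omega
  set PP : Fin 38 → Ideal (MvPolynomial ιSV k) := fun i =>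
    if h : (i : ℕ) = 0 then ⊥
    else Ideal.comap (Ideal.Quotient.mk I) (ch.toFun ⟨(i : ℕ) - 1, by omega⟩).asIdeal with hPP
  have hPP0 : PP 0 = ⊥ := by rw [hPP]; simp
  have hPPsucc : ∀ i : Fin 37,
      PP i.succ = Ideal.comap (Ideal.Quotient.mk I) (ch.toFun ⟨i.val, by omega⟩).asIdeal := by
    intro i
    rw [hPP]
    have hne : ((i.succ : Fin 38) : ℕ) ≠ 0 := by simp [Fin.val_succ]
    dsimp only
    rw [dif_neg hne]
    have harg : (⟨((i.succ : Fin 38) : ℕ) - 1, by omega⟩ : Fin (ch.length + 1))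
        = ⟨i.val, by omega⟩ := by
      apply Fin.ext
      simp [Fin.val_succ]
    rw [harg]
  have hPPprime : ∀ i, (PP i).IsPrime := by
    intro i
    refine Fin.cases ?_ ?_ i
    · rw [hPP0]; exact Ideal.bot_prime
    · intro j
      rw [hPPsucc j]
      exact Ideal.IsPrime.comap _
  have hmono : ∀ (a b : Fin 37), a ≤ b → PP a.succ ≤ PP b.succ := by
    intro a b hab
    rw [hPPsucc a, hPPsucc b]
    apply Ideal.comap_mono
    exact ch.strictMono.monotone (Fin.mk_le_mk.mpr (Fin.le_def.mp hab))
  have hchain : ∀ i : Fin 37, PP i.castSucc ≤ PP i.succ := by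
    intro i
    refine Fin.cases ?_ ?_ i
    · rw [Fin.castSucc_zero, hPP0]; exact bot_le
    · intro j
      rw [show ((j.succ : Fin 37).castSucc : Fin 38) = ((j.castSucc : Fin 37).succ : Fin 38)
        from by ext; simp]
      exact hmono j.castSucc j.succ (by rw [Fin.le_def]; simp <;> omega)
  have hstrict : ∀ i : Fin 36, PP (i.castSucc).succ < PP i.succ.succ := by
    intro i
    refine lt_of_le_of_ne (hmono _ _ (by rw [Fin.le_def]; simp <;> omega)) ?_
    rw [hPPsucc i.castSucc, hPPsucc i.succ]
    intro hcon
    have heq2 : (ch.toFun ⟨(i.castSucc : Fin 37).val, by omega⟩)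
        = (ch.toFun ⟨(i.succ : Fin 37).val, by omega⟩) := by
      apply PrimeSpectrum.ext
      have := Ideal.comap_injective_of_surjective (Ideal.Quotient.mk I)
        Ideal.Quotient.mk_surjective hcon
      simpa using this
    have hne2 : (⟨(i.castSucc : Fin 37).val, by omega⟩ : Fin (ch.length + 1))
        < ⟨(i.succ : Fin 37).val, by omega⟩ := by
      rw [Fin.lt_def]; simp
    exact absurd (ch.strictMono hne2) (by rw [heq2]; exact lt_irrefl _)
  choose y hy1 hy2 using fun i : Fin 36 => SetLike.exists_of_lt (hstrict i)
  set xx : Fin 37 → MvPolynomial ιSV k := Fin.cases (Fdet (k := k)) y with hxx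
  have hx1 : ∀ i : Fin 37, xx i ∈ PP i.succ := by
    intro i
    refine Fin.cases (motive := fun i => xx i ∈ PP i.succ) ?_ ?_ i
    · rw [hPPsucc 0]
      show Fin.cases (motive := fun _ => MvPolynomial ιSV k) (Fdet (k := k)) y (0 : Fin 37) ∈ _
      rw [Fin.cases_zero, Ideal.mem_comap]
      have hq0 : (Ideal.Quotient.mk I) (Fdet (k := k)) = 0 :=
        Ideal.Quotient.eq_zero_iff_mem.mpr (Fdet_mem_variety_ideal (k := k))
      rw [hq0]
      exact Submodule.zero_mem _
    · intro j
      show Fin.cases (motive := fun _ => MvPolynomial ιSV k) (Fdet (k := k)) y (Fin.succ j) ∈ _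
      rw [Fin.cases_succ]
      exact hy1 j
  have hx2 : ∀ i : Fin 37, xx i ∉ PP i.castSucc := by
    intro i
    refine Fin.cases (motive := fun i => xx i ∉ PP i.castSucc) ?_ ?_ i
    · rw [Fin.castSucc_zero, hPP0]
      show Fin.cases (Fdet (k := k)) y (0 : Fin 37) ∉ (⊥ : Ideal (MvPolynomial ιSV k))
      rw [Fin.cases_zero, Ideal.mem_bot]
      exact Fdet_ne_zero
    · intro j
      show Fin.cases (Fdet (k := k)) y (Fin.succ j) ∉ PP (Fin.castSucc (Fin.succ j))
      rw [Fin.cases_succ]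
      rw [show Fin.castSucc (Fin.succ j) = Fin.succ (Fin.castSucc j) from by ext; simp]
      exact hy2 j
  obtain ⟨Q, hQ0, hQx⟩ := exists_algdep (σ := ιSV) 37 (by have := card_ιSV_le; omega) xx
  have hkey := chain_key (R := MvPolynomial ιSV k) 37 PP hPPprime hchain xx hx1 hx2 Q hQ0
  exact hkey (by rw [hQx, hPP0]; exact Submodule.zero_mem _)

end Conj3
end SV17
end Aux

/-- The example `P^2 × P^2`, `a = (2,2)`, `s = 8` of Section 3: for any `8` points of
`P^2 × P^2` there is a nonzero form of bidegree `(2,2)` in `℘_{P_1}^2 ∩ ⋯ ∩ ℘_{P_8}^2`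
(a product of two bidegree-`(1,1)` forms through the `8` points); consequently
`H(Z,(2,2)) ≤ 35 < 36`, `dim V^8 ≤ 34 < 35 = min {35, 8·5 − 1}`, and the Segre–Veronese
variety `V = V_{(2,2),(2,2)} ⊆ P^35` is `7`-defective. -/
theorem statement_17 (k : Type) [Field k] [IsAlgClosed k] [CharZero k] :
    (∀ v : Fin 8 → (i : Fin 2) → Fin ((![2, 2] : Fin 2 → ℕ) i + 1) → k,
      (∀ j i, v j i ≠ 0) →
      ∃ f1 f2 f : MvPolynomial (MPVar 2 ![2, 2]) k,
        f ≠ 0 ∧ f ∈ multiHomog k 2 ![2, 2] ![2, 2] ∧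
        (∀ j, f ∈ (mpPointIdeal k 2 ![2, 2] (v j)) ^ 2) ∧
        f1 ∈ multiHomog k 2 ![2, 2] ![1, 1] ∧ f2 ∈ multiHomog k 2 ![2, 2] ![1, 1] ∧
        (∀ j, f1 ∈ mpPointIdeal k 2 ![2, 2] (v j)) ∧
        (∀ j, f2 ∈ mpPointIdeal k 2 ![2, 2] (v j)) ∧
        f = f1 * f2) ∧
    (∀ v : Fin 8 → (i : Fin 2) → Fin ((![2, 2] : Fin 2 → ℕ) i + 1) → k,
      (∀ j i, v j i ≠ 0) →
      Module.finrank k (multiHomog k 2 ![2, 2] ![2, 2]) -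
        Module.finrank k
          (mIdealPiece k (⨅ j, (mpPointIdeal k 2 ![2, 2] (v j)) ^ 2) ![2, 2]) ≤ 35) ∧
    (∀ d, HasDim k (secantVariety k (segreVeronese k 2 ![2, 2] ![2, 2]) 8) d →
      d ≤ 34) := by
  exact ⟨fun v hv => SV17.conjunct1 v hv, fun v hv => SV17.conjunct2 v hv,
    fun d hd => SV17.conjunct3 d hd⟩
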